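/- arXiv:math/9805031 — 5 statements merged into one kernel-verified Lean document; each statement's English description precedes it below -/
import Mathlib

section
/- Let γ : ℝ≥0 → ℝ² be a C¹ curve such that (i) |γ(t)| → ∞ as t → ∞, (ii) γ(t)/|γ(t)| → (0,1) as t → ∞, (iii) |γ'(t)| = 1 for all t, and (iv) |γ'(t) − γ(t)/|γ(t)|| ≤ 2k/|γ(t)| for all t, where k > 0 is a constant. Then the first coordinate of γ satisfies |γ₁(t)| < 4k for all t ≥ 0. -/
open Filter Set Topology

/-!
Let `f = ℓ ∘ γ` for a coordinate functional `ℓ` of norm at most `1` and `n = ‖γ‖`. The radial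
condition gives `f' ≥ (f - 2k) / n`, and unit speed gives `n t ≤ t + C` for a constant `C`.
If `f` ever exceeded `2k`, comparison with the line `2k + ε (t + C)` would keep `f` above it, so
`f / n ≥ ε > 0` forever, contradicting `γ / ‖γ‖ → (0, 1)`. Hence `|γ₁| ≤ 2k < 4k`.
-/

section Comparison

variable {f f' n : ℝ → ℝ} {a c : ℝ}

theorem affine_le_of_deriv_ge_div {C : ℝ} (hc : 0 ≤ c)
    (hf : ∀ t ≥ a, HasDerivAt f (f' t) t) (hfn : ∀ t ≥ a, f t ≤ n t)
    (hnC : ∀ t ≥ a, n t < t + C) (hf' : ∀ t ≥ a, (f t - c) / n t ≤ f' t) (ha : c < f a) :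
    ∀ t ≥ a, c + (f a - c) / (a + C) * (t + C) ≤ f t := by
  have haC : 0 < a + C := by linarith [hfn a le_rfl, hnC a le_rfl]
  set ε := (f a - c) / (a + C) with hε
  intro b hb
  refine image_le_of_deriv_right_lt_deriv_boundary' (f := fun t => c + ε * (t + C))
    (f' := fun _ => ε) (by fun_prop)
    (fun x _ => by simpa using (((hasDerivAt_id x).add_const C).const_mul ε).const_add c
      |>.hasDerivWithinAt)
    (by rw [hε, div_mul_cancel₀ _ haC.ne']; linarith)
    (fun x hx => (hf x hx.1).continuousAt.continuousWithinAt)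
    (fun x hx => (hf x hx.1).hasDerivWithinAt) ?_ (right_mem_Icc.2 hb)
  rintro x ⟨hax, -⟩ hcontact
  have hxC : 0 < x + C := by linarith
  have hgap : f x - c = ε * (x + C) := by linarith
  have hgap_pos : 0 < f x - c := by rw [hgap]; positivity
  have hnx : 0 < n x := by linarith [hfn x hax]
  calc ε = (f x - c) / (x + C) := by rw [hgap, mul_div_cancel_right₀ _ hxC.ne']
    _ < (f x - c) / n x := div_lt_div_of_pos_left hgap_pos hnx (hnC x hax)
    _ ≤ f' x := hf' x hax

theorem le_of_deriv_ge_div_of_tendsto_div (hc : 0 ≤ c)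
    (hf : ∀ t ≥ a, HasDerivAt f (f' t) t) (hfn : ∀ t ≥ a, f t ≤ n t)
    (hn : ∀ t ≥ a, n t ≤ n a + (t - a)) (hf' : ∀ t ≥ a, (f t - c) / n t ≤ f' t)
    (hlim : Tendsto (fun t => f t / n t) atTop (𝓝 0)) : f a ≤ c := by
  by_contra! ha
  set C := n a - a + 1
  have hlower := affine_le_of_deriv_ge_div (C := C) hc hf hfn (fun t ht => by linarith [hn t ht])
    hf' ha
  set ε := (f a - c) / (a + C)
  have haC : 0 < a + C := by linarith [hfn a le_rfl]
  have hε : 0 < ε := div_pos (by linarith) haC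
  have hratio : ∀ t ≥ a, ε ≤ f t / n t := by
    intro t ht
    have htC : 0 < t + C := by linarith
    have hft : ε * (t + C) ≤ f t := by linarith [hlower t ht]
    have hnt : 0 < n t := by nlinarith [hfn t ht]
    calc ε ≤ f t / (t + C) := (le_div_iff₀ htC).2 hft
      _ ≤ f t / n t := div_le_div_of_nonneg_left (by nlinarith) hnt (by linarith [hn t ht])
  obtain ⟨t, hsmall, ht⟩ := ((hlim.eventually_lt_const hε).and (eventually_ge_atTop a)).exists
  linarith [hratio t ht]

end Comparison

section Curve

variable {E : Type*} [NormedAddCommGroup E] [NormedSpace ℝ E] {γ γ' : ℝ → E} {a : ℝ}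

theorem norm_le_norm_add_of_norm_deriv_le_one (hγ : ∀ t ≥ a, HasDerivAt γ (γ' t) t)
    (hγ' : ∀ t ≥ a, ‖γ' t‖ ≤ 1) {t : ℝ} (ht : a ≤ t) : ‖γ t‖ ≤ ‖γ a‖ + (t - a) := by
  have hdisp := norm_image_sub_le_of_norm_deriv_le_segment'
    (fun x hx => (hγ x hx.1).hasDerivWithinAt) (fun x hx => hγ' x hx.1) t (right_mem_Icc.2 ht)
  linarith [norm_le_norm_add_norm_sub' (γ t) (γ a)]

theorem apply_le_of_norm_deriv_sub_radial_le {ℓ : E →L[ℝ] ℝ} {y : E} {c : ℝ} (hc : 0 ≤ c)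
    (hℓ : ‖ℓ‖ ≤ 1) (hy : ℓ y = 0) (hγ : ∀ t ≥ a, HasDerivAt γ (γ' t) t)
    (hγ' : ∀ t ≥ a, ‖γ' t‖ ≤ 1) (hdir : Tendsto (fun t => ‖γ t‖⁻¹ • γ t) atTop (𝓝 y))
    (hradial : ∀ t ≥ a, ‖γ' t - ‖γ t‖⁻¹ • γ t‖ ≤ c / ‖γ t‖) : ∀ t ≥ a, ℓ (γ t) ≤ c := by
  have hℓ_le : ∀ v, ℓ v ≤ ‖v‖ := fun v =>
    (le_abs_self _).trans <| (ℓ.le_opNorm v).trans (mul_le_of_le_one_left (norm_nonneg v) hℓ)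
  intro s hs
  refine le_of_deriv_ge_div_of_tendsto_div (f := fun t => ℓ (γ t)) (f' := fun t => ℓ (γ' t)) (n := fun t => ‖γ t‖) hc
    (fun t ht => ℓ.hasFDerivAt.comp_hasDerivAt t (hγ t (hs.trans ht))) (fun t _ => hℓ_le _)
    (fun t ht => norm_le_norm_add_of_norm_deriv_le_one (fun u hu => hγ u (hs.trans hu))
      (fun u hu => hγ' u (hs.trans hu)) ht) (fun t ht => ?_) ?_
  · have hdev := (hℓ_le (‖γ t‖⁻¹ • γ t - γ' t)).trans
      ((norm_sub_rev _ _).trans_le (hradial t (hs.trans ht)))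
    rw [map_sub, map_smul, smul_eq_mul] at hdev
    rw [sub_div, ← inv_mul_eq_div]
    linarith
  · have hcoord := (ℓ.continuous.tendsto y).comp hdir
    simp only [Function.comp_def, map_smul, smul_eq_mul, inv_mul_eq_div, hy] at hcoord
    exact hcoord

end Curve

theorem planar_curve_first_coordinate_bound_general
    (k : ℝ) (hk : 0 < k)
    (γ γ' : ℝ → EuclideanSpace ℝ (Fin 2))
    (hderiv : ∀ t ≥ (0 : ℝ), HasDerivAt γ (γ' t) t)
    (y : EuclideanSpace ℝ (Fin 2)) (hy0 : y 0 = 0)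
    (hdir : Tendsto (fun t => ‖γ t‖⁻¹ • γ t) atTop (nhds y))
    (hunit : ∀ t ≥ (0 : ℝ), ‖γ' t‖ = 1)
    (hradial : ∀ t ≥ (0 : ℝ), ‖γ' t - ‖γ t‖⁻¹ • γ t‖ ≤ 2 * k / ‖γ t‖) :
    ∀ t ≥ (0 : ℝ), |γ t 0| < 4 * k := by
  intro t ht
  set π₀ : EuclideanSpace ℝ (Fin 2) →L[ℝ] ℝ := EuclideanSpace.proj 0
  have hπ₀ : ‖π₀‖ ≤ 1 :=
    ContinuousLinearMap.opNorm_le_bound _ zero_le_one fun v => by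
      simpa [π₀] using PiLp.norm_apply_le v 0
  have hbound : ∀ ℓ : EuclideanSpace ℝ (Fin 2) →L[ℝ] ℝ, ‖ℓ‖ ≤ 1 → ℓ y = 0 → ℓ (γ t) ≤ 2 * k :=
    fun ℓ hℓ hy => apply_le_of_norm_deriv_sub_radial_le (by positivity) hℓ hy hderiv
      (fun s hs => (hunit s hs).le) hdir hradial t ht
  have hupper : γ t 0 ≤ 2 * k := hbound π₀ hπ₀ hy0
  have hlower : -γ t 0 ≤ 2 * k := hbound (-π₀) (by rwa [norm_neg]) (by simp [π₀, hy0])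
  rw [abs_lt]
  constructor <;> linarith

/-- A unit-speed C¹ curve in the plane that tends to infinity in the
vertical direction `(0,1)` and whose derivative is within `2k/|γ(t)|` of the radial
direction has first coordinate bounded in absolute value by `4k`. -/
theorem planar_curve_first_coordinate_bound
    (k : ℝ) (hk : 0 < k)
    (γ γ' : ℝ → EuclideanSpace ℝ (Fin 2))
    (hderiv : ∀ t ≥ (0 : ℝ), HasDerivAt γ (γ' t) t)
    (hC1 : ContinuousOn γ' (Set.Ici 0))
    (hinfty : Tendsto (fun t => ‖γ t‖) atTop atTop)
    (y : EuclideanSpace ℝ (Fin 2)) (hy0 : y 0 = 0) (hy1 : y 1 = 1)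
    (hdir : Tendsto (fun t => ‖γ t‖⁻¹ • γ t) atTop (nhds y))
    (hunit : ∀ t ≥ (0 : ℝ), ‖γ' t‖ = 1)
    (hradial : ∀ t ≥ (0 : ℝ), ‖γ' t - ‖γ t‖⁻¹ • γ t‖ ≤ 2 * k / ‖γ t‖) :
    ∀ t ≥ (0 : ℝ), |γ t 0| < 4 * k :=
  planar_curve_first_coordinate_bound_general k hk γ γ' hderiv y hy0 hdir hunit hradial
end

section
/- The hyperbola X = {(x,y) ∈ ℂ² : xy = 1} is transverse to infinity: there exists a constant k > 0 such that for every point p ∈ X, the angle between the vector p and the tangent line T_p X satisfies ∠(p, T_p X) < k/‖p‖. -/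
open scoped ComplexOrder

/-- The angle between two vectors in a complex Hermitian space,
`arccos (|⟨p,v⟩| / (‖p‖‖v‖))`. -/
noncomputable def vecAngle (p v : EuclideanSpace ℂ (Fin 2)) : ℝ :=
  Real.arccos (‖(inner ℂ p v : ℂ)‖ / (‖p‖ * ‖v‖))

/-!
At `p = (x, y)` the vector `v = (x, -y)` is tangent to every hyperbola `xy = const` through `p`,
has the same length as `p`, and `⟨p, v⟩ = |x|² - |y|²`. Hence the sine of the angle between
`p` and `v` is `2|xy| / ‖p‖²`, and since `θ ≤ (π/2) sin θ` on `[0, π/2]` the angle is at most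
`π |xy| / ‖p‖²`. On `xy = 1` this is `π / ‖p‖²`, which is less than `π / ‖p‖` because
`‖p‖² ≥ 2|xy| = 2`.
-/

open Real

theorem Real.arccos_le_pi_div_two_mul_sqrt {c : ℝ} (hc : 0 ≤ c) :
    arccos c ≤ π / 2 * √(1 - c ^ 2) := by
  have h := mul_le_sin (arccos_nonneg c) (arccos_le_pi_div_two.2 hc)
  rw [sin_arccos] at h
  calc arccos c = π / 2 * (2 / π * arccos c) := by field_simp
    _ ≤ π / 2 * √(1 - c ^ 2) := by gcongr

namespace EuclideanSpace

variable (p : EuclideanSpace ℂ (Fin 2))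

theorem norm_sq_fin_two : ‖p‖ ^ 2 = ‖p 0‖ ^ 2 + ‖p 1‖ ^ 2 := by
  simp [EuclideanSpace.norm_sq_eq, Fin.sum_univ_two]

theorem two_mul_norm_mul_le_norm_sq : 2 * ‖p 0 * p 1‖ ≤ ‖p‖ ^ 2 := by
  rw [norm_sq_fin_two, norm_mul]
  nlinarith [sq_nonneg (‖p 0‖ - ‖p 1‖)]

noncomputable def hyperbolaTangent : EuclideanSpace ℂ (Fin 2) := !₂[p 0, -p 1]

theorem hyperbolaTangent_mem_tangent :
    p 1 * hyperbolaTangent p 0 + p 0 * hyperbolaTangent p 1 = 0 := by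
  simp only [hyperbolaTangent, Matrix.cons_val_zero, Matrix.cons_val_one, Matrix.cons_val_fin_one]
  ring

theorem hyperbolaTangent_ne_zero (hp : p 0 ≠ 0) : hyperbolaTangent p ≠ 0 := by
  intro h
  exact hp (by simpa [hyperbolaTangent] using congrArg (· 0) h)

theorem norm_hyperbolaTangent : ‖hyperbolaTangent p‖ = ‖p‖ := by
  rw [← sq_eq_sq₀ (norm_nonneg _) (norm_nonneg _), norm_sq_fin_two, norm_sq_fin_two]
  simp [hyperbolaTangent]

theorem inner_hyperbolaTangent :
    inner ℂ p (hyperbolaTangent p) = ((‖p 0‖ ^ 2 - ‖p 1‖ ^ 2 : ℝ) : ℂ) := by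
  simp only [hyperbolaTangent, PiLp.inner_apply, RCLike.inner_apply, Fin.sum_univ_two,
    Matrix.cons_val_zero, Matrix.cons_val_one, Matrix.cons_val_fin_one, neg_mul, RCLike.mul_conj,
    Complex.coe_algebraMap, Complex.ofReal_sub, Complex.ofReal_pow]
  ring

theorem vecAngle_hyperbolaTangent_le (hp : p ≠ 0) :
    vecAngle p (hyperbolaTangent p) ≤ π * ‖p 0 * p 1‖ / ‖p‖ ^ 2 := by
  have hsin : 1 - (|‖p 0‖ ^ 2 - ‖p 1‖ ^ 2| / ‖p‖ ^ 2) ^ 2 = (2 * ‖p 0 * p 1‖ / ‖p‖ ^ 2) ^ 2 := by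
    rw [div_pow, div_pow, sq_abs, norm_mul]
    field_simp
    linear_combination (‖p‖ ^ 2 + ‖p 0‖ ^ 2 + ‖p 1‖ ^ 2) * norm_sq_fin_two p
  calc vecAngle p (hyperbolaTangent p)
      = arccos (|‖p 0‖ ^ 2 - ‖p 1‖ ^ 2| / ‖p‖ ^ 2) := by
        rw [vecAngle, inner_hyperbolaTangent, norm_hyperbolaTangent, Complex.norm_real,
          Real.norm_eq_abs, ← sq]
    _ ≤ π / 2 * (2 * ‖p 0 * p 1‖ / ‖p‖ ^ 2) := by
        rw [← sqrt_sq (by positivity : 0 ≤ 2 * ‖p 0 * p 1‖ / ‖p‖ ^ 2), ← hsin]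
        exact arccos_le_pi_div_two_mul_sqrt (by positivity)
    _ = π * ‖p 0 * p 1‖ / ‖p‖ ^ 2 := by ring

end EuclideanSpace

open EuclideanSpace in
/-- The hyperbola `{(x,y) : xy = 1} ⊂ ℂ²` is transverse to infinity:
there is `k > 0` such that for every point `p` of the hyperbola, the angle between `p`
and its tangent line `T_p X = {v : p₂ v₁ + p₁ v₂ = 0}` (the infimum of the angles between
`p` and nonzero tangent vectors) is less than `k / ‖p‖`. -/
theorem hyperbola_transverse_to_infinity :
    ∃ k : ℝ, 0 < k ∧ ∀ p : EuclideanSpace ℂ (Fin 2), p 0 * p 1 = 1 →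
      sInf {a : ℝ | ∃ v : EuclideanSpace ℂ (Fin 2),
          p 1 * v 0 + p 0 * v 1 = 0 ∧ v ≠ 0 ∧ a = vecAngle p v} < k / ‖p‖ := by
  refine ⟨π, pi_pos, fun p hp => ?_⟩
  have hp0 : p 0 ≠ 0 := left_ne_zero_of_mul_eq_one hp
  have hp_ne : p ≠ 0 := fun h => hp0 (by simp [h])
  have hnorm : 1 < ‖p‖ := by
    have := two_mul_norm_mul_le_norm_sq p
    rw [hp, norm_one] at this
    nlinarith [norm_nonneg p]
  have hbdd : BddBelow {a : ℝ | ∃ v : EuclideanSpace ℂ (Fin 2),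
      p 1 * v 0 + p 0 * v 1 = 0 ∧ v ≠ 0 ∧ a = vecAngle p v} :=
    ⟨0, by rintro _ ⟨v, -, -, rfl⟩; exact arccos_nonneg _⟩
  calc _ ≤ vecAngle p (hyperbolaTangent p) :=
        csInf_le hbdd ⟨_, hyperbolaTangent_mem_tangent p, hyperbolaTangent_ne_zero p hp0, rfl⟩
    _ ≤ π * ‖p 0 * p 1‖ / ‖p‖ ^ 2 := vecAngle_hyperbolaTangent_le p hp_ne
    _ < π / ‖p‖ := by
        rw [hp, norm_one, mul_one, sq]
        exact div_lt_div_of_pos_left pi_pos (by positivity) (lt_mul_left (by positivity) hnorm)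
end

section
/- Let f = ∏_{i∈I} l_i : V → ℂ be a finite product of nonzero linear forms l_i ∈ V*, and let X = f⁻¹(1). Then the norm of the differential ‖d_x f‖ is bounded from below on X: there exists c > 0 such that ‖d_x f‖ ≥ c for all x ∈ X. -/
/-!
On `X` every `lᵢ(x)` is nonzero and the Leibniz rule gives `d_x f = ∑ᵢ lᵢ / lᵢ(x)`, so it
suffices to bound `‖∑ᵢ bᵢ lᵢ‖` from below by `c ‖b‖` on the cone of vectors `b = (1 / lᵢ(y))ᵢ`;
on `X` the sup norm of such a `b` is at least `1`, because `∏ᵢ bᵢ = 1`. By compactness of the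
unit sphere of `ι → ℂ`, the bound holds unless some `b* ≠ 0` with `∑ᵢ b*ᵢ lᵢ = 0` is a limit of
vectors of the cone. It is not: on the cone, `∑ᵢ b*ᵢ / bᵢ = (∑ᵢ b*ᵢ lᵢ)(y)` vanishes, while
this function of `b` is continuous at `b*`, where it equals the number of nonzero
coordinates of `b*`.
-/

open Finset

section Cone

variable {𝕜 F G : Type*} [RCLike 𝕜] [NormedAddCommGroup F] [NormedSpace 𝕜 F]
  [FiniteDimensional 𝕜 F] [NormedAddCommGroup G] [NormedSpace 𝕜 G]

theorem exists_pos_mul_norm_le_norm_of_smul_mem (A : F →ₗ[𝕜] G) {R : Set F}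
    (hR : ∀ b ∈ R, ∀ t : 𝕜, t ≠ 0 → t • b ∈ R) (hA : ∀ b ∈ closure R, A b = 0 → b = 0) :
    ∃ c > 0, ∀ b ∈ R, c * ‖b‖ ≤ ‖A b‖ := by
  have := FiniteDimensional.proper_rclike 𝕜 F
  have hK : IsCompact (closure R ∩ Metric.sphere 0 1) :=
    (isCompact_sphere 0 1).inter_left isClosed_closure
  obtain ⟨c, hc, hcK⟩ := hK.exists_forall_le' (a := 0)
    (A.continuous_of_finiteDimensional.norm.continuousOn) fun b ⟨hbR, hb1⟩ =>
      norm_pos_iff.2 fun hAb => by simp [hA b hbR hAb] at hb1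
  refine ⟨c, hc, fun b hb => ?_⟩
  rcases eq_or_ne b 0 with rfl | hb0
  · simp
  have hnorm : ‖b‖ ≠ 0 := norm_ne_zero_iff.2 hb0
  have hunit : ((‖b‖⁻¹ : ℝ) : 𝕜) • b ∈ closure R ∩ Metric.sphere 0 1 := by
    refine ⟨subset_closure (hR b hb _ (by simpa using hnorm)), ?_⟩
    simp [norm_smul, hnorm]
  have hscaled := hcK _ hunit
  rwa [map_smul, norm_smul, RCLike.norm_ofReal, abs_inv, abs_norm, inv_mul_eq_div,
    le_div_iff₀ (by positivity)] at hscaled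

end Cone

section ReciprocalValues

variable {𝕜 E ι : Type*} [RCLike 𝕜] [NormedAddCommGroup E] [NormedSpace 𝕜 E]

def reciprocalValues (l : ι → E →L[𝕜] 𝕜) : Set (ι → 𝕜) :=
  {b | ∃ y, ∀ i, b i * l i y = 1}

theorem smul_mem_reciprocalValues {l : ι → E →L[𝕜] 𝕜} {b : ι → 𝕜}
    (hb : b ∈ reciprocalValues l) {t : 𝕜} (ht : t ≠ 0) : t • b ∈ reciprocalValues l := by
  obtain ⟨y, hy⟩ := hb
  refine ⟨t⁻¹ • y, fun i => ?_⟩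
  rw [Pi.smul_apply, map_smul, smul_eq_mul, smul_eq_mul, ← hy i]
  field_simp

theorem eq_zero_of_mem_closure_reciprocalValues [Fintype ι] {l : ι → E →L[𝕜] 𝕜} {b : ι → 𝕜}
    (hb : b ∈ closure (reciprocalValues l)) (hrel : ∑ i, b i • l i = 0) : b = 0 := by
  by_contra hb0
  set φ : (ι → 𝕜) → 𝕜 := fun c => ∑ i, b i / c i
  have hφ_cont : ContinuousAt φ b := by
    refine tendsto_finsetSum _ fun i _ => ?_
    rcases eq_or_ne (b i) 0 with hbi | hbi
    · simp only [hbi, zero_div]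
      exact tendsto_const_nhds
    · exact (continuous_const.continuousAt).div (continuous_apply i).continuousAt hbi
  have hφ_ne : φ b ≠ 0 := by
    have : φ b = (#{i | b i ≠ 0} : 𝕜) := by
      simp only [φ, card_filter, Nat.cast_sum, Nat.cast_ite, Nat.cast_one, Nat.cast_zero]
      refine sum_congr rfl fun i _ => ?_
      split_ifs with hbi
      · exact div_self hbi
      · simp [not_not.1 hbi]
    rw [this, Nat.cast_ne_zero, ← pos_iff_ne_zero, card_pos]
    obtain ⟨i, hi⟩ := Function.ne_iff.1 hb0
    exact ⟨i, by simpa using hi⟩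
  have hφ_zero : ∀ c ∈ reciprocalValues l, φ c = 0 := by
    rintro c ⟨y, hy⟩
    have hinv : ∀ i, (c i)⁻¹ = l i y := fun i => inv_eq_of_mul_eq_one_right (hy i)
    simpa [φ, div_eq_mul_inv, hinv] using congrArg (· y) hrel
  obtain ⟨c, hc, hφc⟩ :=
    ((mem_closure_iff_frequently.1 hb).and_eventually (hφ_cont.eventually_ne hφ_ne)).exists
  exact hφc (hφ_zero c hc)

theorem exists_pos_mul_norm_inv_le_norm_sum_inv_smul [Fintype ι] (l : ι → E →L[𝕜] 𝕜) :
    ∃ c > 0, ∀ y : E, (∀ i, l i y ≠ 0) →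
      c * ‖fun i => (l i y)⁻¹‖ ≤ ‖∑ i, (l i y)⁻¹ • l i‖ := by
  obtain ⟨c, hc, hbound⟩ := exists_pos_mul_norm_le_norm_of_smul_mem
    (Fintype.linearCombination 𝕜 l) (fun _ hb _ ht => smul_mem_reciprocalValues hb ht)
    fun b hb hAb => eq_zero_of_mem_closure_reciprocalValues hb
      (by rwa [Fintype.linearCombination_apply] at hAb)
  refine ⟨c, hc, fun y hy => ?_⟩
  simpa [Fintype.linearCombination_apply] using
    hbound _ ⟨y, fun i => inv_mul_cancel₀ (hy i)⟩

end ReciprocalValues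

theorem one_le_norm_of_prod_eq_one {𝕜 ι : Type*} [NormedField 𝕜] [Fintype ι] [Nonempty ι]
    {b : ι → 𝕜} (hb : ∏ i, b i = 1) : 1 ≤ ‖b‖ := by
  have : 1 ≤ ‖b‖ ^ Fintype.card ι := calc
    1 = ∏ i, ‖b i‖ := by rw [← norm_prod, hb, norm_one]
    _ ≤ ∏ _i : ι, ‖b‖ := prod_le_prod (fun _ _ => norm_nonneg _) fun i _ => norm_le_pi_norm b i
    _ = ‖b‖ ^ Fintype.card ι := by rw [prod_const, card_univ]
  exact (one_le_pow_iff_of_nonneg (norm_nonneg _) Fintype.card_ne_zero).1 this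

theorem prod_erase_eq_inv_of_prod_eq_one {M ι : Type*} [DivisionCommMonoid M] [Fintype ι]
    [DecidableEq ι] {a : ι → M} (ha : ∏ i, a i = 1) (i : ι) : ∏ j ∈ univ.erase i, a j = (a i)⁻¹ :=
  (inv_eq_of_mul_eq_one_right (by rw [mul_prod_erase _ _ (mem_univ i), ha])).symm

theorem differential_of_product_of_linear_forms_bounded_below_general
    (d : ℕ) (ι : Type) [Fintype ι] [Nonempty ι] [DecidableEq ι]
    (l : ι → (EuclideanSpace ℂ (Fin d) →L[ℂ] ℂ)) :
    ∃ c : ℝ, 0 < c ∧ ∀ x : EuclideanSpace ℂ (Fin d),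
      (∏ i, l i x) = 1 →
      c ≤ ‖∑ i, (∏ j ∈ univ.erase i, l j x) • l i‖ := by
  obtain ⟨c, hc, hbound⟩ := exists_pos_mul_norm_inv_le_norm_sum_inv_smul l
  refine ⟨c, hc, fun x hx => ?_⟩
  have hne : ∀ i, l i x ≠ 0 := fun i => prod_ne_zero_iff.1 (hx ▸ one_ne_zero) i (mem_univ i)
  have hinv : ∏ i, (l i x)⁻¹ = 1 := by rw [prod_inv_distrib, hx, inv_one]
  calc c = c * 1 := (mul_one c).symm
    _ ≤ c * ‖fun i => (l i x)⁻¹‖ := by gcongr; exact one_le_norm_of_prod_eq_one hinv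
    _ ≤ ‖∑ i, (l i x)⁻¹ • l i‖ := hbound x hne
    _ = ‖∑ i, (∏ j ∈ univ.erase i, l j x) • l i‖ := by
      simp only [prod_erase_eq_inv_of_prod_eq_one hx]

/-- Let `f = ∏ᵢ lᵢ : ℂ^d → ℂ` be a finite product of nonzero linear
forms and `X = f⁻¹(1)`.  The differential of `f` at `x` is
`d_x f = ∑ᵢ (∏_{j≠i} lⱼ(x)) • lᵢ` (Leibniz rule).  Then `‖d_x f‖` is bounded from
below on `X`: there is `c > 0` with `c ≤ ‖d_x f‖` for all `x ∈ X`. -/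
theorem differential_of_product_of_linear_forms_bounded_below
    (d : ℕ) (ι : Type) [Fintype ι] [Nonempty ι] [DecidableEq ι]
    (l : ι → (EuclideanSpace ℂ (Fin d) →L[ℂ] ℂ)) (hl : ∀ i, l i ≠ 0) :
    ∃ c : ℝ, 0 < c ∧ ∀ x : EuclideanSpace ℂ (Fin d),
      (∏ i, l i x) = 1 →
      c ≤ ‖∑ i, (∏ j ∈ univ.erase i, l j x) • l i‖ :=
  differential_of_product_of_linear_forms_bounded_below_general d ι l
end

section
/- Let f : V → ℂ be a homogeneous polynomial of degree m ≥ 1 and X = f⁻¹(1). Then every v ∈ V with f(v) = 0 lies in the asymptotic cone of X, i.e., f⁻¹(0) ⊂ as(X), where as(X) is the closure of the set of all limits lim_{j→∞} λ_j x_j with x_j ∈ X, λ_j ∈ ℂ*, λ_j → 0. -/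
/-!
A zero `w` of `f` is a limit of points `uⱼ` with `f uⱼ ≠ 0`: otherwise `f` would vanish on a
neighbourhood of `w`, hence everywhere by the identity principle. If `λⱼ` is an `m`-th root of
`f uⱼ`, homogeneity puts `λⱼ⁻¹ • uⱼ` on `f = 1`, and `λⱼ → 0` because `f uⱼ → f w = 0`; so
`w = lim λⱼ • (λⱼ⁻¹ • uⱼ)` is one of the limits defining the asymptotic cone.
-/

open Filter MvPolynomial Topology Asymptotics

theorem MvPolynomial.IsHomogeneous.eval_smul {R σ : Type*} [CommSemiring R]
    {φ : MvPolynomial σ R} {m : ℕ} (hφ : φ.IsHomogeneous m) (c : R) (x : σ → R) :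
    eval (c • x) φ = c ^ m * eval x φ := by
  rw [eval_eq, eval_eq, Finset.mul_sum]
  refine Finset.sum_congr rfl fun s hs => ?_
  simp only [Pi.smul_apply, smul_eq_mul, mul_pow, Finset.prod_mul_distrib,
    Finset.prod_pow_eq_pow_sum, ← hφ.degree_eq_sum_deg_support hs]
  ring

theorem Filter.Tendsto.of_pow_nhds_zero {ι 𝕜 : Type*} [NormedDivisionRing 𝕜] {l : Filter ι}
    {u : ι → 𝕜} {m : ℕ} (hm : m ≠ 0) (h : Tendsto (u · ^ m) l (𝓝 0)) : Tendsto u l (𝓝 0) := by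
  rw [← isLittleO_one_iff 𝕜] at h ⊢
  exact IsLittleO.of_pow (by simpa [Pi.pow_def] using h) hm

theorem MvPolynomial.mem_closure_setOf_eval_ne_zero {𝕜 σ : Type*} [RCLike 𝕜] [Fintype σ]
    {p : MvPolynomial σ 𝕜} (hp : ∃ z, eval z p ≠ 0) (w : σ → 𝕜) :
    w ∈ closure {x | eval x p ≠ 0} := by
  by_contra hw
  rw [mem_closure_iff_frequently, not_frequently] at hw
  obtain ⟨z, hz⟩ := hp
  have hzero : (eval · p) =ᶠ[𝓝 w] 0 := hw.mono fun _ => of_not_not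
  exact hz <| (AnalyticOnNhd.eval_mvPolynomial p).eqOn_zero_of_preconnected_of_eventuallyEq_zero
    isPreconnected_univ (Set.mem_univ w) hzero (Set.mem_univ z)

/-- The limits `lim λⱼ • xⱼ` with `xⱼ ∈ X` and `λⱼ → 0` through nonzero scalars; the asymptotic
cone of `X` is the closure of this set. -/
def asymptoticLimits (𝕜 : Type*) {E : Type*} [Zero 𝕜] [TopologicalSpace 𝕜] [TopologicalSpace E]
    [SMul 𝕜 E] (X : Set E) : Set E :=
  {v | ∃ (x : ℕ → E) (lam : ℕ → 𝕜), (∀ j, x j ∈ X) ∧ (∀ j, lam j ≠ 0) ∧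
    Tendsto lam atTop (𝓝 0) ∧ Tendsto (fun j => lam j • x j) atTop (𝓝 v)}

theorem MvPolynomial.IsHomogeneous.mem_asymptoticLimits {𝕜 σ : Type*} [NormedField 𝕜]
    [IsAlgClosed 𝕜] {f : MvPolynomial σ 𝕜} {m : ℕ} (hm : m ≠ 0) (hf : f.IsHomogeneous m)
    {u : ℕ → σ → 𝕜} {w : σ → 𝕜} (hu : Tendsto u atTop (𝓝 w)) (hne : ∀ j, eval (u j) f ≠ 0)
    (hval : Tendsto (fun j => eval (u j) f) atTop (𝓝 0)) :
    w ∈ asymptoticLimits 𝕜 {x | eval x f = 1} := by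
  choose lam hlam using fun j =>
    IsAlgClosed.exists_pow_nat_eq (eval (u j) f) (Nat.pos_of_ne_zero hm)
  have hlam_ne : ∀ j, lam j ≠ 0 := fun j h => hne j (by rw [← hlam j, h, zero_pow hm])
  simp only [← hlam] at hval
  refine ⟨fun j => (lam j)⁻¹ • u j, lam, fun j => ?_, hlam_ne, hval.of_pow_nhds_zero hm, ?_⟩
  · show eval ((lam j)⁻¹ • u j) f = 1
    rw [hf.eval_smul, inv_pow, hlam, inv_mul_cancel₀ (hne j)]
  · simpa only [smul_inv_smul₀ (hlam_ne _)] using hu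

theorem zero_set_subset_asymptotic_cone_general
    (d m : ℕ) (hm : 1 ≤ m) (f : MvPolynomial (Fin d) ℂ) (hf : f.IsHomogeneous m)
    (hX : ∃ x : Fin d → ℂ, eval x f = 1)
    (w : Fin d → ℂ) (hw : eval w f = 0) :
    w ∈ closure {v : Fin d → ℂ | ∃ (x : ℕ → Fin d → ℂ) (lam : ℕ → ℂ),
        (∀ j, eval (x j) f = 1) ∧ (∀ j, lam j ≠ 0) ∧
        Tendsto lam atTop (nhds 0) ∧
        Tendsto (fun j => lam j • x j) atTop (nhds v)} := by
  obtain ⟨z, hz⟩ := hX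
  have hw_closure : w ∈ closure {x | eval x f ≠ 0} :=
    mem_closure_setOf_eval_ne_zero ⟨z, hz ▸ one_ne_zero⟩ w
  obtain ⟨u, hu_ne, hu⟩ := mem_closure_iff_seq_limit.mp hw_closure
  have hval : Tendsto (fun j => eval (u j) f) atTop (𝓝 0) :=
    hw ▸ ((continuous_eval f).tendsto w).comp hu
  exact subset_closure (hf.mem_asymptoticLimits (by omega) hu hu_ne hval)

/-- Let `f` be a nonzero homogeneous polynomial of degree `m ≥ 1` on
`ℂ^d` with `X = f⁻¹(1)` nonempty.  Then every zero of `f` lies in the asymptotic cone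
of `X`, defined as the closure of the set of limits `lim λⱼ xⱼ` with `xⱼ ∈ X`,
`λⱼ ∈ ℂ*`, `λⱼ → 0`. -/
theorem zero_set_subset_asymptotic_cone
    (d m : ℕ) (hm : 1 ≤ m) (f : MvPolynomial (Fin d) ℂ) (hf : f.IsHomogeneous m)
    (hfne : f ≠ 0) (hX : ∃ x : Fin d → ℂ, eval x f = 1)
    (w : Fin d → ℂ) (hw : eval w f = 0) :
    w ∈ closure {v : Fin d → ℂ | ∃ (x : ℕ → Fin d → ℂ) (lam : ℕ → ℂ),
        (∀ j, eval (x j) f = 1) ∧ (∀ j, lam j ≠ 0) ∧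
        Tendsto lam atTop (nhds 0) ∧
        Tendsto (fun j => lam j • x j) atTop (nhds v)} :=
  zero_set_subset_asymptotic_cone_general d m hm f hf hX w hw
end

section
/- Let {l_i}_{i∈I} be a finite family of nonzero linear forms on V = ℂ^d with ⋂_i Ker l_i = {0}, let f = ∏_{i∈I} l_i and X = f⁻¹(1). Then X is a covering space of degree |I| over the quotient (V ∖ f⁻¹(0))/ℂ*, via the restriction of the quotient map V ∖ f⁻¹(0) → (V ∖ f⁻¹(0))/ℂ*. Consequently χ(X) = |I| · χ((V ∖ f⁻¹(0))/ℂ*). -/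
open Finset

variable (d : ℕ) (ι : Type) [Fintype ι] [DecidableEq ι]

/-- The complement of the zero locus of `f = ∏ᵢ lᵢ` in `V = ℂ^d`. -/
abbrev NonzeroLocus (l : ι → (EuclideanSpace ℂ (Fin d) →L[ℂ] ℂ)) : Type :=
  {v : EuclideanSpace ℂ (Fin d) // (∏ i, l i v) ≠ 0}

/-- The setoid on `V ∖ f⁻¹(0)` whose classes are the orbits of the scaling
`ℂ*`-action. -/
def scalingSetoid (l : ι → (EuclideanSpace ℂ (Fin d) →L[ℂ] ℂ)) :
    Setoid (NonzeroLocus d ι l) where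
  r a b := ∃ c : ℂˣ, (b : EuclideanSpace ℂ (Fin d)) = (c : ℂ) • (a : EuclideanSpace ℂ (Fin d))
  iseqv := by
    constructor
    · intro a; exact ⟨1, by simp⟩
    · rintro a b ⟨c, h⟩
      exact ⟨c⁻¹, by rw [h, smul_smul, Units.inv_mul, one_smul]⟩
    · rintro a b c ⟨u, hu⟩ ⟨w, hw⟩
      exact ⟨w * u, by rw [hw, hu, smul_smul, Units.val_mul]⟩

/-- The quotient `(V ∖ f⁻¹(0))/ℂ*`, with the quotient topology. -/
abbrev OrbitSpace (l : ι → (EuclideanSpace ℂ (Fin d) →L[ℂ] ℂ)) : Type :=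
  Quotient (scalingSetoid d ι l)

/-- The hypersurface `X = f⁻¹(1)`. -/
abbrev LevelOne (l : ι → (EuclideanSpace ℂ (Fin d) →L[ℂ] ℂ)) : Type :=
  {v : EuclideanSpace ℂ (Fin d) // (∏ i, l i v) = 1}

/-- The restriction to `X = f⁻¹(1)` of the quotient map `V ∖ f⁻¹(0) → (V ∖ f⁻¹(0))/ℂ*`. -/
def quotientOfLevelOne (l : ι → (EuclideanSpace ℂ (Fin d) →L[ℂ] ℂ)) :
    LevelOne d ι l → OrbitSpace d ι l :=
  fun x => Quotient.mk (scalingSetoid d ι l) ⟨x.1, by rw [x.2]; exact one_ne_zero⟩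

/-!
Since `f` is homogeneous of degree `|I|`, two points of `X` lie in the same `ℂ*`-orbit exactly
when they differ by an `|I|`-th root of unity, and the group `μ_|I|` of these roots acts freely
on `X` (no point of `X` is `0`). Thus `X → (V ∖ f⁻¹(0))/ℂ*` is the quotient of `X` by a free
action of a finite group, hence an `|I|`-sheeted covering, as soon as it is a quotient map. It is
even open: near a given `v`, the point `λ v` of `X` over the orbit of `v` can be chosen
continuously in `v`, using a continuous local branch of the `|I|`-th root of `1 / f v`.
-/

open Topology Filter

theorem exists_nthRoot_continuousAt {𝕜 : Type*} [NontriviallyNormedField 𝕜] [ProperSpace 𝕜]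
    {n : ℕ} (hn : (n : 𝕜) ≠ 0) {c : 𝕜} (hc : c ≠ 0) :
    ∃ ρ : 𝕜 → 𝕜, ContinuousAt ρ (c ^ n) ∧ ρ (c ^ n) = c ∧ ∀ᶠ z in 𝓝 (c ^ n), ρ z ^ n = z := by
  obtain ⟨e, hce, he⟩ :=
    (isCoveringMapOn_npow n hn).isLocalHomeomorphOn c (pow_ne_zero n hc)
  have hec : c ^ n = e c := congrFun he c
  refine ⟨e.symm, ?_, ?_, ?_⟩ <;> rw [hec]
  · exact e.continuousAt_symm (e.map_source hce)
  · exact e.left_inv hce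
  · exact (e.eventually_right_inverse' hce).mono fun z hz => (congrFun he _).trans hz

theorem ContinuousLinearMap.prod_apply_smul {I R M : Type*} [Fintype I] [CommSemiring R]
    [TopologicalSpace R] [AddCommMonoid M] [TopologicalSpace M] [Module R M]
    (l : I → M →L[R] R) (c : R) (v : M) :
    ∏ i, l i (c • v) = c ^ Fintype.card I * ∏ i, l i v := by
  simp only [map_smul, smul_eq_mul, Finset.prod_mul_distrib, Finset.prod_const, Finset.card_univ]

section LevelOne

variable {d : ℕ} {I : Type} [Fintype I] {l : I → (EuclideanSpace ℂ (Fin d) →L[ℂ] ℂ)}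

theorem OrbitSpace.mk_units_smul (c : ℂˣ) (v : NonzeroLocus d I l)
    (h : ∏ i, l i ((c : ℂ) • v.1) ≠ 0) :
    (Quotient.mk _ ⟨(c : ℂ) • v.1, h⟩ : OrbitSpace d I l) = Quotient.mk _ v :=
  Quotient.sound ((scalingSetoid d I l).symm ⟨c, rfl⟩)

instance : MulAction (rootsOfUnity (Fintype.card I) ℂ) (LevelOne d I l) where
  smul ζ x := ⟨((ζ : ℂˣ) : ℂ) • x.1, by
    rw [ContinuousLinearMap.prod_apply_smul, x.2, mul_one, ← Units.val_pow_eq_pow_val,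
      (mem_rootsOfUnity _ _).1 ζ.2, Units.val_one]⟩
  one_smul x := Subtype.ext (one_smul ℂ x.1)
  mul_smul ζ η x := Subtype.ext (mul_smul ((ζ : ℂˣ) : ℂ) ((η : ℂˣ) : ℂ) x.1)

theorem LevelOne.coe_smul (ζ : rootsOfUnity (Fintype.card I) ℂ) (x : LevelOne d I l) :
    ((ζ • x : LevelOne d I l) : EuclideanSpace ℂ (Fin d)) = ((ζ : ℂˣ) : ℂ) • x.1 := rfl

instance : ContinuousConstSMul (rootsOfUnity (Fintype.card I) ℂ) (LevelOne d I l) :=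
  ⟨fun _ => ((continuous_const_smul _).comp continuous_subtype_val).subtype_mk _⟩

theorem LevelOne.coe_ne_zero [Nonempty I] (x : LevelOne d I l) : x.1 ≠ 0 := fun h => by
  simpa [h] using x.2

instance [Nonempty I] : IsCancelSMul (rootsOfUnity (Fintype.card I) ℂ) (LevelOne d I l) :=
  isCancelSMul_iff_eq_one_of_smul_eq.2 fun ζ x h => by
    have h' : ((ζ : ℂˣ) : ℂ) • x.1 = (1 : ℂ) • x.1 := by
      rw [one_smul]; exact congrArg Subtype.val h
    exact Subtype.ext (Units.ext (smul_left_injective ℂ x.coe_ne_zero h'))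

theorem quotientOfLevelOne_eq_iff (x y : LevelOne d I l) :
    quotientOfLevelOne d I l x = quotientOfLevelOne d I l y ↔
      x ∈ MulAction.orbit (rootsOfUnity (Fintype.card I) ℂ) y := by
  constructor
  · intro h
    obtain ⟨c, hc⟩ := Quotient.exact h
    have hc : y.1 = (c : ℂ) • x.1 := hc
    have hc_pow : (c : ℂ) ^ Fintype.card I = 1 := by
      have := congrArg (fun v => ∏ i, l i v) hc
      simp only [ContinuousLinearMap.prod_apply_smul, x.2, y.2, mul_one] at this
      exact this.symm
    refine ⟨⟨c⁻¹, (mem_rootsOfUnity _ _).2 (Units.ext ?_)⟩, Subtype.ext ?_⟩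
    · simp [hc_pow]
    · simp [LevelOne.coe_smul, hc]
  · rintro ⟨ζ, rfl⟩
    exact OrbitSpace.mk_units_smul (ζ : ℂˣ) ⟨y.1, _⟩ _

theorem continuous_quotientOfLevelOne : Continuous (quotientOfLevelOne d I l) :=
  continuous_quot_mk.comp (continuous_subtype_val.subtype_mk _)

def toLevelOne (v : NonzeroLocus d I l) (c : ℂ) (hc : c ^ Fintype.card I = (∏ i, l i v.1)⁻¹) :
    LevelOne d I l :=
  ⟨c • v.1, by rw [ContinuousLinearMap.prod_apply_smul, hc, inv_mul_cancel₀ v.2]⟩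

theorem quotientOfLevelOne_toLevelOne [Nonempty I] (v : NonzeroLocus d I l) (c : ℂ)
    (hc : c ^ Fintype.card I = (∏ i, l i v.1)⁻¹) :
    quotientOfLevelOne d I l (toLevelOne v c hc) = Quotient.mk _ v := by
  have hc0 : c ≠ 0 := ne_zero_pow Fintype.card_ne_zero (hc ▸ inv_ne_zero v.2)
  exact OrbitSpace.mk_units_smul (Units.mk0 c hc0) v _

theorem surjective_quotientOfLevelOne [Nonempty I] :
    Function.Surjective (quotientOfLevelOne d I l) := by
  rintro ⟨v⟩
  obtain ⟨c, hc⟩ := IsAlgClosed.exists_pow_nat_eq (∏ i, l i v.1)⁻¹ (Fintype.card_pos (α := I))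
  exact ⟨toLevelOne v c hc, quotientOfLevelOne_toLevelOne v c hc⟩

theorem isOpenMap_quotientOfLevelOne [Nonempty I] : IsOpenMap (quotientOfLevelOne d I l) := by
  intro O hO
  obtain ⟨O', hO', rfl⟩ := isOpen_induced_iff.1 hO
  rw [← isQuotientMap_quotient_mk'.isOpen_preimage, isOpen_iff_mem_nhds]
  rintro v ⟨x, hxO, hxv⟩
  obtain ⟨c, hc⟩ := Quotient.exact hxv
  have hc : v.1 = (c : ℂ) • x.1 := hc
  have hfv : (∏ i, l i v.1)⁻¹ = ((c⁻¹ : ℂˣ) : ℂ) ^ Fintype.card I := by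
    rw [hc, ContinuousLinearMap.prod_apply_smul, x.2, mul_one, Units.val_inv_eq_inv_val, inv_pow]
  obtain ⟨ρ, hρ_cont, hρ_root, hρ_pow⟩ := exists_nthRoot_continuousAt
    (Nat.cast_ne_zero.2 (Fintype.card_ne_zero (α := I))) (c⁻¹).ne_zero
  have hf : Tendsto (fun w : NonzeroLocus d I l => (∏ i, l i w.1)⁻¹) (𝓝 v)
      (𝓝 (((c⁻¹ : ℂˣ) : ℂ) ^ Fintype.card I)) :=
    hfv ▸ (((continuous_finsetProd _ fun i _ => (l i).continuous).comp
      continuous_subtype_val).continuousAt.inv₀ v.2)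
  have hσ : Tendsto (fun w : NonzeroLocus d I l => ρ (∏ i, l i w.1)⁻¹ • w.1) (𝓝 v) (𝓝 x.1) := by
    have := (hρ_cont.tendsto.comp hf).smul (continuous_subtype_val.tendsto v)
    rwa [hρ_root, hc, ← Units.smul_def, ← Units.smul_def, inv_smul_smul] at this
  filter_upwards [hσ (hO'.mem_nhds hxO), hf hρ_pow] with w hwO hw_pow
  exact ⟨toLevelOne w _ hw_pow, hwO, quotientOfLevelOne_toLevelOne w _ hw_pow⟩

instance : LocallyCompactSpace (LevelOne d I l) :=
  (isClosed_eq (continuous_finsetProd _ fun i _ => (l i).continuous)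
    continuous_const).isClosedEmbedding_subtypeVal.locallyCompactSpace

theorem isQuotientCoveringMap_quotientOfLevelOne [Nonempty I] :
    IsQuotientCoveringMap (quotientOfLevelOne d I l) (rootsOfUnity (Fintype.card I) ℂ) :=
  (isOpenMap_quotientOfLevelOne.isQuotientMap continuous_quotientOfLevelOne
    surjective_quotientOfLevelOne).isQuotientCoveringMap_of_properlyDiscontinuousSMul
    (quotientOfLevelOne_eq_iff _ _)

end LevelOne

theorem levelOne_covering_of_orbit_space [Nonempty ι]
    (l : ι → (EuclideanSpace ℂ (Fin d) →L[ℂ] ℂ)) :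
    IsCoveringMap (quotientOfLevelOne d ι l) ∧
    ∀ b : OrbitSpace d ι l,
      Nat.card {x : LevelOne d ι l // quotientOfLevelOne d ι l x = b} =
        Fintype.card ι := by
  have hp := isQuotientCoveringMap_quotientOfLevelOne (l := l)
  refine ⟨hp.isCoveringMap, fun b => ?_⟩
  obtain ⟨x, rfl⟩ := hp.surjective b
  rw [← Complex.card_rootsOfUnity (Fintype.card ι)]
  exact Nat.card_congr (hp.fiberEquivGroup ⟨x, rfl⟩)
end
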